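/- arXiv:math/0603408 — 2 statements merged into one kernel-verified Lean document; each statement's English description precedes it below -/
import Mathlib

section
/- For all k ≥ 0 and all real φ, h_{2k}(sinh φ|q) = (-1)^k q^{-k²} (q;q²)_k D_k^{(q^{-1})}(e^{2φ} + e^{-2φ} | q), where D_n^{(q^{-1})} is the polynomial sequence determined by D_0 = 1 and the three-term recurrence for dual discrete q-ultraspherical polynomials with s = q^{-1}. -/
open Finset Real

/-- Shifted q-factorial `(a;q)_n`. -/
noncomputable def qPoch (a q : ℝ) (n : ℕ) : ℝ := ∏ j ∈ Finset.range n, (1 - a * q ^ j)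

/-- The `q⁻¹`-Hermite polynomials defined by their three-term recurrence. -/
noncomputable def qHermite (q : ℝ) : ℕ → ℝ → ℝ
  | 0, _ => 1
  | 1, x => 2 * x
  | (n + 2), x => 2 * x * qHermite q (n + 1) x - (q ^ (n + 1))⁻¹ * (1 - q ^ (n + 1)) * qHermite q n x

/-- Connection between even `q⁻¹`-Hermite polynomials and the dual discrete
`q`-ultraspherical polynomials with `s = q⁻¹`.  The sequence `D` is characterized by
`D 0 = 1` together with the three-term recurrence (the `D (n-1)` term carries the
coefficient `1 - q^(2n)`, which vanishes at `n = 0`, encoding `D_{-1} = 0`). -/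
theorem stmt5 (q : ℝ) (hq0 : 0 < q) (hq1 : q < 1)
    (D : ℕ → ℝ → ℝ)
    (hD0 : ∀ y : ℝ, D 0 y = 1)
    (hDrec : ∀ (n : ℕ) (y : ℝ),
      y * D n y =
        -(q ^ (2 * n + 1))⁻¹ * (1 - q⁻¹ * q ^ (2 * n + 2)) * D (n + 1) y
          + (q ^ (2 * n + 1))⁻¹ * (1 + q) * D n y
          - (q ^ (2 * n))⁻¹ * (1 - q ^ (2 * n)) * D (n - 1) y) :
    ∀ (k : ℕ) (φ : ℝ),
      qHermite q (2 * k) (Real.sinh φ) =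
        (-1) ^ k * (q ^ (k ^ 2))⁻¹ * qPoch q (q ^ 2) k *
          D k (Real.exp (2 * φ) + Real.exp (-(2 * φ))) := by
  have hqne : q ≠ 0 := ne_of_gt hq0
  -- cleaned (division-free) Hermite recurrence
  have hH' : ∀ (n : ℕ) (x : ℝ), q^(n+1) * qHermite q (n+2) x =
      2*x*(q^(n+1) * qHermite q (n+1) x) - (1-q^(n+1)) * qHermite q n x := by
    intro n x
    simp only [qHermite]
    field_simp
  -- cleaned (division-free) D recurrence
  have hrec' : ∀ (n : ℕ) (z : ℝ), q^(2*n+1) * (z * D n z) =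
      -(1-q^(2*n+1)) * D (n+1) z + (1+q)*(D n z) - q*(1-q^(2*n))*(D (n-1) z) := by
    intro n z
    rw [hDrec n z]
    field_simp
    ring
  have key4 : ∀ φ : ℝ, 4 * Real.sinh φ ^ 2 = Real.exp (2*φ) + Real.exp (-(2*φ)) - 2 := by
    intro φ
    have h1 : Real.exp (2*φ) = Real.exp φ * Real.exp φ := by rw [← Real.exp_add]; ring_nf
    have h2 : Real.exp (-(2*φ)) = Real.exp (-φ) * Real.exp (-φ) := by rw [← Real.exp_add]; ring_nf
    have h3 : Real.exp φ * Real.exp (-φ) = 1 := by rw [← Real.exp_add]; simp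
    rw [Real.sinh_eq, h1, h2]
    linear_combination (-2 : ℝ) * h3
  have main : ∀ k : ℕ,
      (∀ φ : ℝ, q^(k^2) * qHermite q (2*k) (Real.sinh φ) =
        (-1)^k * qPoch q (q^2) k * D k (Real.exp (2*φ) + Real.exp (-(2*φ)))) ∧
      (∀ φ : ℝ, q^((k+1)^2) * qHermite q (2*(k+1)) (Real.sinh φ) =
        (-1)^(k+1) * qPoch q (q^2) (k+1) * D (k+1) (Real.exp (2*φ) + Real.exp (-(2*φ)))) := by
    intro k
    induction k with
    | zero =>
      constructor
      · intro φ
        simp [qHermite, qPoch, hD0]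
      · intro φ
        set x := Real.sinh φ with hx
        set y := Real.exp (2*φ) + Real.exp (-(2*φ)) with hy
        have ek : 4 * x ^ 2 = y - 2 := key4 φ
        have h2 := hH' 0 x
        norm_num at h2
        have hh1 : qHermite q 1 x = 2*x := rfl
        have hh0 : qHermite q 0 x = 1 := rfl
        rw [hh1, hh0] at h2
        have er0 := hrec' 0 y
        norm_num [hD0] at er0
        have hqp : qPoch q (q^2) 1 = 1 - q := by simp [qPoch]
        rw [show (0+1 : ℕ) = 1 from rfl, show 2*(1:ℕ) = 2 from rfl, hqp]
        linear_combination q * ek + h2 + er0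
    | succ m ih =>
      obtain ⟨ihm, ihm1⟩ := ih
      refine ⟨ihm1, ?_⟩
      intro φ
      set x := Real.sinh φ with hx
      set y := Real.exp (2*φ) + Real.exp (-(2*φ)) with hy
      have ek : 4 * x ^ 2 = y - 2 := key4 φ
      have i1 := ihm φ
      have i2 := ihm1 φ
      rw [show 2*(m+1) = 2*m+2 from by ring] at i2
      have h4 := hH' (2*m+2) x
      rw [show 2*m+2+2 = 2*m+4 from by ring, show 2*m+2+1 = 2*m+3 from by ring] at h4
      have h3 := hH' (2*m+1) x
      rw [show 2*m+1+2 = 2*m+3 from by ring, show 2*m+1+1 = 2*m+2 from by ring] at h3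
      have h2 := hH' (2*m) x
      have er := hrec' (m+1) y
      rw [show 2*(m+1)+1 = 2*m+3 from by ring, show m+1+1 = m+2 from by ring,
        show 2*(m+1) = 2*m+2 from by ring, show m+1-1 = m from by omega] at er
      have hq2m : q * (q^2)^m = q^(2*m+1) := by rw [← pow_mul]; ring
      have hq2m1 : q * (q^2)^(m+1) = q^(2*m+3) := by rw [← pow_mul]; ring
      have hP1 : qPoch q (q^2) (m+1) = qPoch q (q^2) m * (1 - q^(2*m+1)) := by
        simp only [qPoch, Finset.prod_range_succ]
        rw [hq2m]
      have hP2 : qPoch q (q^2) (m+2) = qPoch q (q^2) m * (1 - q^(2*m+1)) * (1 - q^(2*m+3)) := by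
        simp only [qPoch, Finset.prod_range_succ]
        rw [hq2m, hq2m1]
      rw [hP1] at i2
      rw [show m+1+1 = m+2 from by ring, show 2*(m+2) = 2*m+4 from by ring, hP2]
      have aux : q * (q^((m+2)^2) * qHermite q (2*m+4) x) =
          q * ((-1)^(m+2) * (qPoch q (q^2) m * (1 - q^(2*m+1)) * (1 - q^(2*m+3))) * D (m+2) y) := by
        linear_combination
          (q^(m^2+2*m+2)) * h4
          + (2*x*q^(m^2+2*m+3)) * h3
          + (q^(m^2+2)*(1-q^(2*m+2))) * h2
          + (q^(m^2+4*m+5) * qHermite q (2*m+2) x) * ek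
          - (q*(1-q^(2*m+3)) + q^2*(1-q^(2*m+2)) - (y-2)*q^(2*m+4)) * i2
          - (q^2*(1-q^(2*m+2))*(1-q^(2*m+1))) * i1
          - (q*(-1)^m*(qPoch q (q^2) m)*(1-q^(2*m+1))) * er
      exact mul_left_cancel₀ hqne aux
  intro k φ
  have h := (main k).1 φ
  have hp : (q:ℝ)^(k^2) ≠ 0 := pow_ne_zero _ hqne
  field_simp
  linear_combination h
end

section
/- For all k ≥ 0 and all real φ, h_{2k+1}(sinh φ|q) = (-1)^k q^{-k(k+1)} (q³;q²)_k (2 sinh φ) D_k^{(q)}(q e^{2φ} + q e^{-2φ} | q), where D_n^{(q)} is the dual discrete q-ultraspherical polynomial sequence with s = q. -/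
/-!
Eliminating the even-index terms from the three-term recurrence of `h_n` gives a three-term
recurrence linking `h_{2k+5}`, `h_{2k+3}` and `h_{2k+1}`. With `y = q e^{2φ} + q e^{-2φ}`,
so that `4 sinh² φ = y / q - 2`, the recurrence of `D_k(y)` rescaled by
`(-1)^k q^{-k(k+1)} (q³;q²)_k` is exactly this one, and the two sequences agree for `k = 0, 1`.
-/

open Finset Real

noncomputable def qHermiteCoeff (q : ℝ) (n : ℕ) : ℝ := (q ^ n)⁻¹ * (1 - q ^ n)

lemma qHermite_add_two (q x : ℝ) (n : ℕ) :
    qHermite q (n + 2) x =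
      2 * x * qHermite q (n + 1) x - qHermiteCoeff q (n + 1) * qHermite q n x :=
  rfl

lemma qHermite_three (q x : ℝ) :
    qHermite q 3 x = 2 * x * (4 * x ^ 2 - qHermiteCoeff q 1 - qHermiteCoeff q 2) := by
  rw [qHermite_add_two q x 1, qHermite_add_two q x 0]
  simp only [qHermite, qHermiteCoeff]
  ring

lemma qHermite_add_four (q x : ℝ) (m : ℕ) :
    qHermite q (m + 4) x =
      (4 * x ^ 2 - qHermiteCoeff q (m + 2) - qHermiteCoeff q (m + 3)) * qHermite q (m + 2) x
        - qHermiteCoeff q (m + 2) * qHermiteCoeff q (m + 1) * qHermite q m x := by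
  have h4 : qHermite q (m + 4) x =
      2 * x * qHermite q (m + 3) x - qHermiteCoeff q (m + 3) * qHermite q (m + 2) x :=
    qHermite_add_two q x (m + 2)
  have h3 : qHermite q (m + 3) x =
      2 * x * qHermite q (m + 2) x - qHermiteCoeff q (m + 2) * qHermite q (m + 1) x :=
    qHermite_add_two q x (m + 1)
  linear_combination h4 + 2 * x * h3 + qHermiteCoeff q (m + 2) * qHermite_add_two q x m

/-- At `n = 0` the term `D (n - 1)` is `D 0` by truncated subtraction, but its coefficient
vanishes. -/
def IsDualQUltraspherical (q s : ℝ) (D : ℕ → ℝ → ℝ) : Prop :=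
  ∀ (n : ℕ) (y : ℝ),
    y * D n y =
      -(q ^ (2 * n + 1))⁻¹ * (1 - s * q ^ (2 * n + 2)) * D (n + 1) y
        + (q ^ (2 * n + 1))⁻¹ * (1 + q) * D n y
        - (q ^ (2 * n))⁻¹ * (1 - q ^ (2 * n)) * D (n - 1) y

noncomputable def dualCoeff (q : ℝ) (k : ℕ) : ℝ :=
  (-1) ^ k * (q ^ (k * (k + 1)))⁻¹ * qPoch (q ^ 3) (q ^ 2) k

lemma dualCoeff_zero (q : ℝ) : dualCoeff q 0 = 1 := by
  simp [dualCoeff, qPoch]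

lemma dualCoeff_succ (q : ℝ) (k : ℕ) :
    dualCoeff q (k + 1) = -(q ^ (2 * k + 2))⁻¹ * (1 - q ^ (2 * k + 3)) * dualCoeff q k := by
  rw [dualCoeff, dualCoeff, qPoch, prod_range_succ, ← qPoch,
    show (k + 1) * (k + 1 + 1) = k * (k + 1) + (2 * k + 2) by ring, pow_add q, mul_inv,
    ← pow_mul, ← pow_add, show 3 + 2 * k = 2 * k + 3 by ring]
  ring

lemma dualCoeff_mul_add_two {q : ℝ} (hq : q ≠ 0) {D : ℕ → ℝ → ℝ}
    (hD : IsDualQUltraspherical q q D) (y : ℝ) (n : ℕ) :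
    dualCoeff q (n + 2) * D (n + 2) y =
      (y / q - 2 - qHermiteCoeff q (2 * n + 3) - qHermiteCoeff q (2 * n + 4))
          * (dualCoeff q (n + 1) * D (n + 1) y)
        - qHermiteCoeff q (2 * n + 3) * qHermiteCoeff q (2 * n + 2) * (dualCoeff q n * D n y) := by
  have h := hD (n + 1) y
  rw [Nat.add_sub_cancel] at h
  rw [dualCoeff_succ q (n + 1), dualCoeff_succ q n]
  simp only [qHermiteCoeff]
  linear_combination (norm := (field_simp; ring))
    (q ^ (2 * n + 2))⁻¹ * (1 - q ^ (2 * n + 3)) * dualCoeff q n / q * h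

theorem qHermite_odd_eq_dualCoeff_mul {q : ℝ} (hq : q ≠ 0) {D : ℕ → ℝ → ℝ}
    (hD0 : ∀ y : ℝ, D 0 y = 1) (hD : IsDualQUltraspherical q q D) (x : ℝ) (k : ℕ) :
    qHermite q (2 * k + 1) x = 2 * x * (dualCoeff q k * D k (q * (4 * x ^ 2 + 2))) := by
  set y := q * (4 * x ^ 2 + 2)
  have hx : 4 * x ^ 2 = y / q - 2 := by field_simp; ring
  induction k using Nat.twoStepInduction with
  | zero => simp [qHermite, dualCoeff_zero, hD0]
  | one =>
    have h := hD 0 y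
    rw [hD0] at h
    rw [qHermite_three, dualCoeff_succ, dualCoeff_zero]
    simp only [qHermiteCoeff]
    linear_combination (norm := (field_simp; ring)) 2 * x / q * h + 2 * x * hx
  | more n ih₀ ih₁ =>
    rw [show 2 * (n + 2) + 1 = 2 * n + 1 + 4 by ring, qHermite_add_four,
      show 2 * n + 1 + 2 = 2 * (n + 1) + 1 by ring, ih₀, ih₁, dualCoeff_mul_add_two hq hD, hx]
    simp only [qHermiteCoeff]
    ring

lemma exp_two_mul_add_exp_neg_two_mul (φ : ℝ) :
    exp (2 * φ) + exp (-(2 * φ)) = 4 * sinh φ ^ 2 + 2 := by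
  have h := cosh_eq (2 * φ)
  rw [cosh_two_mul, cosh_sq] at h
  linarith

theorem stmt6_general (q : ℝ) (hq0 : 0 < q)
    (D : ℕ → ℝ → ℝ)
    (hD0 : ∀ y : ℝ, D 0 y = 1)
    (hDrec : ∀ (n : ℕ) (y : ℝ),
      y * D n y =
        -(q ^ (2 * n + 1))⁻¹ * (1 - q * q ^ (2 * n + 2)) * D (n + 1) y
          + (q ^ (2 * n + 1))⁻¹ * (1 + q) * D n y
          - (q ^ (2 * n))⁻¹ * (1 - q ^ (2 * n)) * D (n - 1) y) :
    ∀ (k : ℕ) (φ : ℝ),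
      qHermite q (2 * k + 1) (Real.sinh φ) =
        (-1) ^ k * (q ^ (k * (k + 1)))⁻¹ * qPoch (q ^ 3) (q ^ 2) k * (2 * Real.sinh φ) *
          D k (q * Real.exp (2 * φ) + q * Real.exp (-(2 * φ))) := by
  intro k φ
  rw [← mul_add, exp_two_mul_add_exp_neg_two_mul,
    qHermite_odd_eq_dualCoeff_mul hq0.ne' hD0 hDrec, dualCoeff]
  ring

/-- Connection between odd `q⁻¹`-Hermite polynomials and the dual discrete
`q`-ultraspherical polynomials with `s = q`. -/
theorem stmt6 (q : ℝ) (hq0 : 0 < q) (hq1 : q < 1)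
    (D : ℕ → ℝ → ℝ)
    (hD0 : ∀ y : ℝ, D 0 y = 1)
    (hDrec : ∀ (n : ℕ) (y : ℝ),
      y * D n y =
        -(q ^ (2 * n + 1))⁻¹ * (1 - q * q ^ (2 * n + 2)) * D (n + 1) y
          + (q ^ (2 * n + 1))⁻¹ * (1 + q) * D n y
          - (q ^ (2 * n))⁻¹ * (1 - q ^ (2 * n)) * D (n - 1) y) :
    ∀ (k : ℕ) (φ : ℝ),
      qHermite q (2 * k + 1) (Real.sinh φ) =
        (-1) ^ k * (q ^ (k * (k + 1)))⁻¹ * qPoch (q ^ 3) (q ^ 2) k * (2 * Real.sinh φ) *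
          D k (q * Real.exp (2 * φ) + q * Real.exp (-(2 * φ))) :=
  stmt6_general q hq0 D hD0 hDrec
end
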